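/- arXiv:2010.12463 — 5 statements merged into one kernel-verified Lean document; each statement's English description precedes it below -/
import Mathlib

section
/- If a finite set of points P has at least 4 points on the boundary of its smallest enclosing circle, then there exists a point p ∈ ∂C(P) which is not critical, i.e., C(P \ {p}) = C(P). -/
/-- `(c, r)` is a smallest enclosing circle of `P`. -/
def IsSEC (P : Set (EuclideanSpace ℝ (Fin 2))) (c : EuclideanSpace ℝ (Fin 2)) (r : ℝ) : Prop :=
  (∀ p ∈ P, dist p c ≤ r) ∧
    ∀ (c' : EuclideanSpace ℝ (Fin 2)) (r' : ℝ), (∀ p ∈ P, dist p c' ≤ r') → r ≤ r'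

/-- If at least 4 points of `P` lie on the boundary of its smallest enclosing circle,
some boundary point is not critical. -/
theorem stmt_5 (P : Set (EuclideanSpace ℝ (Fin 2))) (hfin : P.Finite)
    (c : EuclideanSpace ℝ (Fin 2)) (r : ℝ) (hsec : IsSEC P c r)
    (hbd : 4 ≤ {p ∈ P | dist p c = r}.ncard) :
    ∃ p ∈ P, dist p c = r ∧ IsSEC (P \ {p}) c r := by
  classical
  -- Step 1: find a small subset T ⊆ P (≤ 3 points) that already forces radius ≥ r.
  have key : ∃ T : Finset (EuclideanSpace ℝ (Fin 2)), ↑T ⊆ P ∧ T.card ≤ 3 ∧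
      ∀ (c' : EuclideanSpace ℝ (Fin 2)) (r' : ℝ), (∀ p ∈ T, dist p c' ≤ r') → r ≤ r' := by
    by_contra hcon
    push_neg at hcon
    -- for each suitable T choose a strictly better circle
    have hch : ∀ T : Finset (EuclideanSpace ℝ (Fin 2)), ∃ cr : EuclideanSpace ℝ (Fin 2) × ℝ,
        (↑T ⊆ P ∧ T.card ≤ 3) → ((∀ p ∈ T, dist p cr.1 ≤ cr.2) ∧ cr.2 < r) := by
      intro T
      by_cases h : ↑T ⊆ P ∧ T.card ≤ 3
      · obtain ⟨c', r', hcov, hlt⟩ := hcon T h.1 h.2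
        exact ⟨(c', r'), fun _ => ⟨hcov, hlt⟩⟩
      · exact ⟨(c, r), fun h' => absurd h' h⟩
    choose f hf using hch
    set s : Finset (EuclideanSpace ℝ (Fin 2)) := hfin.toFinset with hs
    set 𝒯 : Finset (Finset (EuclideanSpace ℝ (Fin 2))) := s.powerset.filter (fun T => T.card ≤ 3) with h𝒯
    have h𝒯ne : 𝒯.Nonempty := ⟨∅, by simp [h𝒯]⟩
    set r'' : ℝ := 𝒯.sup' h𝒯ne (fun T => (f T).2) with hr''
    have hmem : ∀ T ∈ 𝒯, ↑T ⊆ P ∧ T.card ≤ 3 := by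
      intro T hT
      simp only [h𝒯, Finset.mem_filter, Finset.mem_powerset] at hT
      refine ⟨?_, hT.2⟩
      intro x hx
      exact hfin.mem_toFinset.mp (hT.1 hx)
    have hr''lt : r'' < r := by
      apply (Finset.sup'_lt_iff h𝒯ne).mpr
      intro T hT
      exact (hf T (hmem T hT)).2
    -- Helly: the closed balls of radius r'' around points of P all intersect
    have hhelly : (⋂ p ∈ s, Metric.closedBall p r'').Nonempty := by
      apply Convex.helly_theorem' (𝕜 := ℝ)
      · intro i _; exact convex_closedBall i r''
      · intro I hI hIcard
        have hrank : Module.finrank ℝ (EuclideanSpace ℝ (Fin 2)) = 2 := finrank_euclideanSpace_fin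
        rw [hrank] at hIcard
        have hI𝒯 : I ∈ 𝒯 := by
          simp only [h𝒯, Finset.mem_filter, Finset.mem_powerset]
          exact ⟨hI, hIcard⟩
        refine ⟨(f I).1, ?_⟩
        simp only [Set.mem_iInter, Metric.mem_closedBall]
        intro p hp
        calc dist (f I).1 p = dist p (f I).1 := dist_comm _ _
          _ ≤ (f I).2 := (hf I (hmem I hI𝒯)).1 p hp
          _ ≤ r'' := Finset.le_sup' (fun T => (f T).2) hI𝒯
    obtain ⟨c₀, hc₀⟩ := hhelly
    simp only [Set.mem_iInter, Metric.mem_closedBall] at hc₀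
    have : r ≤ r'' := by
      apply hsec.2 c₀ r''
      intro p hp
      rw [dist_comm]
      exact hc₀ p (hfin.mem_toFinset.mpr hp)
    linarith
  obtain ⟨T, hTP, hTcard, hTmin⟩ := key
  -- Step 2: pick a boundary point not in T
  have hBfin : {p ∈ P | dist p c = r}.Finite := hfin.subset (fun x hx => hx.1)
  have hex : ∃ p ∈ {p ∈ P | dist p c = r}, p ∉ (T : Set (EuclideanSpace ℝ (Fin 2))) := by
    by_contra h
    push_neg at h
    have hsub : {p ∈ P | dist p c = r} ⊆ (T : Set (EuclideanSpace ℝ (Fin 2))) := h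
    have := Set.ncard_le_ncard hsub T.finite_toSet
    rw [Set.ncard_coe_finset] at this
    omega
  obtain ⟨p, hpB, hpT⟩ := hex
  refine ⟨p, hpB.1, hpB.2, ?_, ?_⟩
  · intro q hq
    exact hsec.1 q hq.1
  · intro c' r' hcov
    apply hTmin c' r'
    intro q hq
    apply hcov
    refine ⟨hTP hq, ?_⟩
    simp only [Set.mem_singleton_iff]
    rintro rfl
    exact hpT hq
end

section
/- The sectorial distance is a metric: for a fixed center c ∈ ℝ² and radius δ > 0, the function dist(p,q) = |d(p,c) − d(q,c)|/δ + min(∠(p,c,q), ∠(q,c,p))/π, defined on points of the punctured disk (points distinct from c), satisfies symmetry, positivity (dist(p,q) = 0 iff p = q), and the triangle inequality. -/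
open Real EuclideanGeometry

lemma abs_toReal_add_le (θ₁ θ₂ : Real.Angle) :
    |(θ₁ + θ₂).toReal| ≤ |θ₁.toReal| + |θ₂.toReal| := by
  set a := θ₁.toReal with ha
  set b := θ₂.toReal with hb
  have ha1 := θ₁.neg_pi_lt_toReal
  have ha2 := θ₁.toReal_le_pi
  have hb1 := θ₂.neg_pi_lt_toReal
  have hb2 := θ₂.toReal_le_pi
  have hsum : θ₁ + θ₂ = ((a + b : ℝ) : Real.Angle) := by
    rw [Real.Angle.coe_add, θ₁.coe_toReal, θ₂.coe_toReal]
  rcases le_or_gt (a + b) π with h1 | h1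
  · rcases lt_or_ge (-π) (a + b) with h2 | h2
    · rw [hsum, Real.Angle.toReal_coe_eq_self_iff.2 ⟨h2, h1⟩]
      exact abs_add_le a b
    · -- a + b ≤ -π, so reduced value is a + b + 2π ∈ (0, π]
      have heq : ((a + b : ℝ) : Real.Angle) = ((a + b + 2 * π : ℝ) : Real.Angle) := by
        rw [Real.Angle.coe_add (a + b) (2 * π), Real.Angle.coe_two_pi, add_zero]
      have hpi : 0 < π := Real.pi_pos
      rw [hsum, heq, Real.Angle.toReal_coe_eq_self_iff.2 ⟨by linarith, by linarith⟩]
      have h3 : |a + b + 2 * π| = a + b + 2 * π := abs_of_nonneg (by linarith)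
      have h4 : |a| + |b| ≥ -(a + b) := by
        have := neg_abs_le a; have := neg_abs_le b; linarith
      rw [h3]; linarith
  · -- a + b > π, reduced is a + b - 2π ∈ (-π, 0)
    have heq : ((a + b : ℝ) : Real.Angle) = ((a + b - 2 * π : ℝ) : Real.Angle) := by
      rw [Real.Angle.coe_sub (a + b) (2 * π), Real.Angle.coe_two_pi, sub_zero]
    have hpi : 0 < π := Real.pi_pos
    rw [hsum, heq, Real.Angle.toReal_coe_eq_self_iff.2 ⟨by linarith, by linarith⟩]
    have h3 : |a + b - 2 * π| = -(a + b - 2 * π) := abs_of_nonpos (by linarith)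
    have h4 : |a| + |b| ≥ a + b := by
      have := le_abs_self a; have := le_abs_self b; linarith
    rw [h3]; linarith

lemma angle_triangle_aux {x y z : EuclideanSpace ℝ (Fin 2)} (hx : x ≠ 0) (hy : y ≠ 0)
    (hz : z ≠ 0) :
    InnerProductGeometry.angle x z ≤
      InnerProductGeometry.angle x y + InnerProductGeometry.angle y z := by
  haveI : Fact (Module.finrank ℝ (EuclideanSpace ℝ (Fin 2)) = 2) :=
    ⟨finrank_euclideanSpace_fin⟩
  let o : Orientation ℝ (EuclideanSpace ℝ (Fin 2)) (Fin 2) :=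
    (EuclideanSpace.basisFun (Fin 2) ℝ).toBasis.orientation
  rw [o.angle_eq_abs_oangle_toReal hx hz, o.angle_eq_abs_oangle_toReal hx hy,
    o.angle_eq_abs_oangle_toReal hy hz, ← o.oangle_add hx hy hz]
  exact abs_toReal_add_le _ _

/-- The sectorial distance with center `c` and scaling radius `δ` is a metric on the
punctured plane: symmetry, positivity, and the triangle inequality. -/
theorem stmt_7 (c : EuclideanSpace ℝ (Fin 2)) (δ : ℝ) (hδ : 0 < δ) :
    let sdist : EuclideanSpace ℝ (Fin 2) → EuclideanSpace ℝ (Fin 2) → ℝ :=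
      fun p q => |dist p c - dist q c| / δ + EuclideanGeometry.angle p c q / Real.pi
    (∀ p q, p ≠ c → q ≠ c → sdist p q = sdist q p) ∧
    (∀ p q, p ≠ c → q ≠ c → (sdist p q = 0 ↔ p = q)) ∧
    (∀ p q s, p ≠ c → q ≠ c → s ≠ c → sdist p q ≤ sdist p s + sdist s q) := by
  intro sdist
  have hpi : 0 < Real.pi := Real.pi_pos
  refine ⟨?_, ?_, ?_⟩
  · intro p q _ _
    simp only [sdist, EuclideanGeometry.angle_comm p c q, abs_sub_comm]
  · intro p q hp hq
    constructor
    · intro h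
      have h1 : 0 ≤ |dist p c - dist q c| / δ := by positivity
      have h2 : 0 ≤ EuclideanGeometry.angle p c q / Real.pi :=
        div_nonneg (EuclideanGeometry.angle_nonneg _ _ _) hpi.le
      have hd : |dist p c - dist q c| = 0 := by
        have h0 : |dist p c - dist q c| / δ = 0 := by simp only [sdist] at h; linarith
        rcases div_eq_zero_iff.1 h0 with h' | h'
        · exact h'
        · exact absurd h' hδ.ne'
      have hang : EuclideanGeometry.angle p c q = 0 := by
        have h0 : EuclideanGeometry.angle p c q / Real.pi = 0 := by
          simp only [sdist] at h; linarith
        rcases div_eq_zero_iff.1 h0 with h' | h'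
        · exact h'
        · exact absurd h' hpi.ne'
      have hdeq : dist p c = dist q c := by
        have := abs_eq_zero.1 hd; linarith
      rw [EuclideanGeometry.angle, InnerProductGeometry.angle_eq_zero_iff] at hang
      obtain ⟨hne, r, hr, hrel⟩ := hang
      have hnorm : ‖q -ᵥ c‖ = ‖p -ᵥ c‖ := by
        simpa [dist_eq_norm_vsub] using hdeq.symm
      rw [hrel, norm_smul, Real.norm_eq_abs, abs_of_pos hr] at hnorm
      have hr1 : r = 1 := by
        have hpn : ‖p -ᵥ c‖ ≠ 0 := norm_ne_zero_iff.2 hne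
        have : r * ‖p -ᵥ c‖ = 1 * ‖p -ᵥ c‖ := by rw [one_mul]; exact hnorm
        exact mul_right_cancel₀ hpn this
      have : q -ᵥ c = p -ᵥ c := by rw [hrel, hr1, one_smul]
      have := vsub_left_cancel this
      exact this.symm
    · rintro rfl
      simp [sdist, EuclideanGeometry.angle_self_of_ne hp]
  · intro p q s hp hq hs
    have hdist : |dist p c - dist q c| ≤ |dist p c - dist s c| + |dist s c - dist q c| :=
      abs_sub_le _ _ _
    have hang : EuclideanGeometry.angle p c q ≤
        EuclideanGeometry.angle p c s + EuclideanGeometry.angle s c q := by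
      have hx : p -ᵥ c ≠ (0 : EuclideanSpace ℝ (Fin 2)) := vsub_ne_zero.2 hp
      have hy : s -ᵥ c ≠ (0 : EuclideanSpace ℝ (Fin 2)) := vsub_ne_zero.2 hs
      have hz : q -ᵥ c ≠ (0 : EuclideanSpace ℝ (Fin 2)) := vsub_ne_zero.2 hq
      exact angle_triangle_aux hx hy hz
    have h1 : |dist p c - dist q c| / δ ≤
        |dist p c - dist s c| / δ + |dist s c - dist q c| / δ := by
      rw [← add_div]; exact div_le_div_of_nonneg_right hdist hδ.le
    have h2 : EuclideanGeometry.angle p c q / Real.pi ≤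
        EuclideanGeometry.angle p c s / Real.pi + EuclideanGeometry.angle s c q / Real.pi := by
      rw [← add_div]; exact div_le_div_of_nonneg_right hang hpi.le
    simp only [sdist]; linarith
end

section
/- If the symmetricity ρ(R) of a configuration R divides ρ(F), and M is a maximum-cardinality subset of points of R on some circle C centered at c(R) such that M forms a regular |M|-gon with |M| > 1 and |M| divides ρ(F), then ρ(R) divides |M|. -/
open scoped Classical

/-- Rotation about `c` by angle `θ` in the complex plane. -/
noncomputable def rot (c : ℂ) (θ : ℝ) (z : ℂ) : ℂ :=
  c + Complex.exp (↑θ * Complex.I) * (z - c)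

/-- `M` is (the vertex multiset of) a regular `m`-gon centered at `c`:
either `m` copies of `c` (radius 0), or `m` distinct points on a common circle of positive
radius about `c`, closed under rotation by `2π/m`. -/
def IsRegularMGon (c : ℂ) (m : ℕ) (M : Multiset ℂ) : Prop :=
  M.card = m ∧
    ((∀ z ∈ M, z = c) ∨
      (M.Nodup ∧ (∃ r : ℝ, 0 < r ∧ ∀ z ∈ M, ‖z - c‖ = r) ∧
        M.map (rot c (2 * Real.pi / (m : ℝ))) = M))

/-- `P` admits a regular partition into regular `m`-gons centered at `c`. -/
def HasSym (c : ℂ) (m : ℕ) (P : Multiset ℂ) : Prop :=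
  ∃ Part : Multiset (Multiset ℂ), Part.join = P ∧ ∀ M ∈ Part, IsRegularMGon c m M

lemma rot_center (c : ℂ) (θ : ℝ) : rot c θ c = c := by simp [rot]

lemma rot_injective (c : ℂ) (θ : ℝ) : Function.Injective (rot c θ) := by
  intro z w h
  have h1 : Complex.exp (↑θ * Complex.I) * (z - c) = Complex.exp (↑θ * Complex.I) * (w - c) :=
    add_left_cancel h
  have h2 := mul_left_cancel₀ (Complex.exp_ne_zero _) h1
  exact sub_left_injective h2

lemma regular_map {c : ℂ} {m : ℕ} {M : Multiset ℂ} (h : IsRegularMGon c m M) :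
    M.map (rot c (2 * Real.pi / (m : ℝ))) = M := by
  rcases h.2 with hc | ⟨_, _, hmap⟩
  · have : Multiset.map (rot c (2 * Real.pi / (m : ℝ))) M = Multiset.map id M :=
      Multiset.map_congr rfl (fun z hz => by rw [hc z hz, rot_center, id])
    rw [this, Multiset.map_id]
  · exact hmap

lemma hasSym_map {c : ℂ} {m : ℕ} {P : Multiset ℂ} (h : HasSym c m P) :
    P.map (rot c (2 * Real.pi / (m : ℝ))) = P := by
  obtain ⟨S, hjoin, hS⟩ := h
  rw [← hjoin, Multiset.map_join]
  congr 1
  have : Multiset.map (Multiset.map (rot c (2 * Real.pi / (m : ℝ)))) S = Multiset.map id S :=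
    Multiset.map_congr rfl (fun X hX => by rw [regular_map (hS X hX), id])
  rw [this, Multiset.map_id]

lemma iter_mem {S : Multiset ℂ} {c : ℂ} {θ : ℝ} (h : S.map (rot c θ) = S)
    {z : ℂ} (hz : z ∈ S) (n : ℕ) :
    c + Complex.exp ((n : ℂ) * (↑θ * Complex.I)) * (z - c) ∈ S := by
  induction n with
  | zero => simpa using hz
  | succ n ih =>
      have h2 : rot c θ (c + Complex.exp ((n : ℂ) * (↑θ * Complex.I)) * (z - c)) ∈ S := by
        rw [← h]; exact Multiset.mem_map_of_mem _ ih
      have key : c + Complex.exp (((n + 1 : ℕ) : ℂ) * (↑θ * Complex.I)) * (z - c)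
          = rot c θ (c + Complex.exp ((n : ℂ) * (↑θ * Complex.I)) * (z - c)) := by
        simp only [rot]
        rw [show (((n + 1 : ℕ)) : ℂ) * (↑θ * Complex.I)
            = ↑θ * Complex.I + (n : ℂ) * (↑θ * Complex.I) by push_cast; ring, Complex.exp_add]
        ring
      rw [key]; exact h2

lemma hasSym_one (c : ℂ) (P : Multiset ℂ) : HasSym c 1 P := by
  refine ⟨P.map (fun z => {z}), ?_, ?_⟩
  · have := Multiset.bind_singleton P id
    simpa [Multiset.bind, Multiset.map_id] using this
  · intro X hX
    rw [Multiset.mem_map] at hX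
    obtain ⟨z, hz, rfl⟩ := hX
    refine ⟨by simp, ?_⟩
    by_cases hzc : z = c
    · left; simp [hzc]
    · right
      refine ⟨Multiset.nodup_singleton z, ⟨‖z - c‖, ?_, ?_⟩, ?_⟩
      · simpa using sub_ne_zero.mpr hzc
      · intro w hw; rw [Multiset.mem_singleton.mp hw]
      · have : rot c (2 * Real.pi / ((1 : ℕ) : ℝ)) z = z := by
          simp only [rot, Nat.cast_one, div_one]
          rw [show ((2 * Real.pi : ℝ) : ℂ) * Complex.I = 2 * (Real.pi : ℂ) * Complex.I by
            push_cast; ring, Complex.exp_two_pi_mul_I]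
          ring
        rw [Multiset.map_singleton, this]

lemma exp_reduce (n : ℕ) (hn : 0 < n) (t : ℤ) :
    Complex.exp ((((t % (n : ℤ)).toNat : ℂ)) / (n : ℂ) * (2 * (Real.pi : ℂ)) * Complex.I)
      = Complex.exp ((t : ℂ) / (n : ℂ) * (2 * (Real.pi : ℂ)) * Complex.I) := by
  have hn0 : (n : ℂ) ≠ 0 := Nat.cast_ne_zero.mpr hn.ne'
  have hint : (t : ℤ) = ((t % (n : ℤ)).toNat : ℤ) + (t / (n : ℤ)) * n := by
    have hmod : ((t % (n : ℤ)).toNat : ℤ) = t % (n : ℤ) :=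
      Int.toNat_of_nonneg (Int.emod_nonneg t (by exact_mod_cast hn.ne'))
    rw [hmod]
    linarith [Int.emod_add_mul_ediv t (n : ℤ)]
  have ht : (t : ℂ) = ((t % (n : ℤ)).toNat : ℂ) + ((t / (n : ℤ) : ℤ) : ℂ) * (n : ℂ) := by
    exact_mod_cast congrArg (fun x : ℤ => (x : ℂ)) hint
  have harg : (t : ℂ) / (n : ℂ) * (2 * (Real.pi : ℂ)) * Complex.I
      = ((t % (n : ℤ)).toNat : ℂ) / (n : ℂ) * (2 * (Real.pi : ℂ)) * Complex.I
        + ((t / (n : ℤ) : ℤ) : ℂ) * (2 * (Real.pi : ℂ) * Complex.I) := by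
    rw [ht]; field_simp
  rw [harg, Complex.exp_add, Complex.exp_int_mul_two_pi_mul_I, mul_one]

/-- If the symmetricity `ρR` of a configuration `R` divides `ρF`, and `M` is a
maximum-cardinality subset of the points of `R` on a circle centered at `c = c(R)`
forming a regular `|M|`-gon with `|M| > 1` and `|M| ∣ ρF`, then `ρR ∣ |M|`. -/
theorem stmt_9 (R : Multiset ℂ) (c : ℂ) (ρR ρF : ℕ)
    (hρR : HasSym c ρR R ∧ ∀ k, HasSym c k R → k ≤ ρR)
    (hdiv : ρR ∣ ρF)
    (rC : ℝ) (M : Finset ℂ)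
    (hMsub : ∀ z ∈ M, z ∈ R ∧ ‖z - c‖ = rC)
    (hMgon : IsRegularMGon c M.card M.val)
    (hM1 : 1 < M.card) (hMdvd : M.card ∣ ρF)
    (hMmax : ∀ M' : Finset ℂ, (∀ z ∈ M', z ∈ R ∧ ‖z - c‖ = rC) →
      IsRegularMGon c M'.card M'.val → 1 < M'.card → M'.card ∣ ρF → M'.card ≤ M.card) :
    ρR ∣ M.card := by
  obtain ⟨hsym, hmax⟩ := hρR
  set m := M.card with hm
  have hρ1 : 1 ≤ ρR := hmax 1 (hasSym_one c R)
  have hρ0 : (ρR : ℂ) ≠ 0 := Nat.cast_ne_zero.mpr (by omega)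
  have hm0 : (m : ℂ) ≠ 0 := Nat.cast_ne_zero.mpr (by omega)
  set L := Nat.lcm ρR m with hL
  have hLne : L ≠ 0 := Nat.lcm_ne_zero (by omega) (by omega)
  have hL0 : (L : ℂ) ≠ 0 := Nat.cast_ne_zero.mpr hLne
  obtain ⟨z0, hz0M, w, hwM, hzw⟩ := Finset.one_lt_card.mp hM1
  have hz0M' : z0 ∈ M.val := hz0M
  -- the nondegenerate branch of hMgon
  have hbr : M.val.Nodup ∧ (∃ r : ℝ, 0 < r ∧ ∀ z ∈ M.val, ‖z - c‖ = r) ∧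
      M.val.map (rot c (2 * Real.pi / (m : ℝ))) = M.val := by
    rcases hMgon.2 with hc | h
    · exact absurd ((hc z0 hz0M).trans (hc w hwM).symm) hzw
    · exact h
  have hMrot : M.val.map (rot c (2 * Real.pi / (m : ℝ))) = M.val := hbr.2.2
  obtain ⟨r, hrpos, hrall⟩ := hbr.2.1
  have hrC : rC = r := by rw [← (hMsub z0 hz0M).2, hrall z0 hz0M']
  have hrCpos : 0 < rC := hrC ▸ hrpos
  have hz0c : z0 - c ≠ 0 := by
    intro h
    have := (hMsub z0 hz0M).2
    rw [h] at this
    simp at this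
    linarith
  have hRrot : R.map (rot c (2 * Real.pi / (ρR : ℝ))) = R := hasSym_map hsym
  -- membership of rotated points, natural exponents
  have memR_nat : ∀ a b : ℕ,
      c + Complex.exp (((a : ℂ) / (ρR : ℂ) + (b : ℂ) / (m : ℂ)) * (2 * (Real.pi : ℂ))
        * Complex.I) * (z0 - c) ∈ R := by
    intro a b
    have hb : c + Complex.exp ((b : ℂ) * (((2 * Real.pi / (m : ℝ)) : ℝ) * Complex.I))
        * (z0 - c) ∈ M.val := iter_mem hMrot hz0M' b
    have hb' : c + Complex.exp ((b : ℂ) / (m : ℂ) * (2 * (Real.pi : ℂ)) * Complex.I)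
        * (z0 - c) ∈ M.val := by
      rw [show (b : ℂ) / (m : ℂ) * (2 * (Real.pi : ℂ)) * Complex.I
          = (b : ℂ) * (((2 * Real.pi / (m : ℝ)) : ℝ) * Complex.I) by push_cast; ring]
      exact hb
    have hbR : (c + Complex.exp ((b : ℂ) / (m : ℂ) * (2 * (Real.pi : ℂ)) * Complex.I)
        * (z0 - c)) ∈ R := (hMsub _ hb').1
    have ha := iter_mem hRrot hbR a
    have heq : c + Complex.exp (((a : ℂ) / (ρR : ℂ) + (b : ℂ) / (m : ℂ)) * (2 * (Real.pi : ℂ))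
          * Complex.I) * (z0 - c)
        = c + Complex.exp ((a : ℂ) * (((2 * Real.pi / (ρR : ℝ)) : ℝ) * Complex.I))
          * ((c + Complex.exp ((b : ℂ) / (m : ℂ) * (2 * (Real.pi : ℂ)) * Complex.I)
            * (z0 - c)) - c) := by
      rw [show ((a : ℂ) / (ρR : ℂ) + (b : ℂ) / (m : ℂ)) * (2 * (Real.pi : ℂ)) * Complex.I
          = (a : ℂ) * (((2 * Real.pi / (ρR : ℝ)) : ℝ) * Complex.I)
            + (b : ℂ) / (m : ℂ) * (2 * (Real.pi : ℂ)) * Complex.I by push_cast; ring,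
        Complex.exp_add]
      ring
    rw [heq]; exact ha
  -- integer exponents
  have memR_int : ∀ a b : ℤ,
      c + Complex.exp (((a : ℂ) / (ρR : ℂ) + (b : ℂ) / (m : ℂ)) * (2 * (Real.pi : ℂ))
        * Complex.I) * (z0 - c) ∈ R := by
    intro a b
    have h := memR_nat (a % (ρR : ℤ)).toNat (b % (m : ℤ)).toNat
    have E : Complex.exp ((((a % (ρR : ℤ)).toNat : ℂ) / (ρR : ℂ)
          + ((b % (m : ℤ)).toNat : ℂ) / (m : ℂ)) * (2 * (Real.pi : ℂ)) * Complex.I)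
        = Complex.exp (((a : ℂ) / (ρR : ℂ) + (b : ℂ) / (m : ℂ)) * (2 * (Real.pi : ℂ))
          * Complex.I) := by
      rw [show (((a % (ρR : ℤ)).toNat : ℂ) / (ρR : ℂ) + ((b % (m : ℤ)).toNat : ℂ) / (m : ℂ))
            * (2 * (Real.pi : ℂ)) * Complex.I
          = ((a % (ρR : ℤ)).toNat : ℂ) / (ρR : ℂ) * (2 * (Real.pi : ℂ)) * Complex.I
            + ((b % (m : ℤ)).toNat : ℂ) / (m : ℂ) * (2 * (Real.pi : ℂ)) * Complex.I by ring,
        Complex.exp_add, exp_reduce ρR (by omega) a, exp_reduce m (by omega) b,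
        ← Complex.exp_add]
      congr 1; ring
    rw [← E]; exact h
  -- Bezout: express k/L
  have hgl : ((Nat.gcd ρR m : ℂ)) * (L : ℂ) = (ρR : ℂ) * (m : ℂ) := by
    exact_mod_cast congrArg (fun x : ℕ => (x : ℂ)) (Nat.gcd_mul_lcm ρR m)
  have hbez : ((Nat.gcd ρR m : ℂ)) = (ρR : ℂ) * ((Nat.gcdA ρR m : ℤ) : ℂ)
      + (m : ℂ) * ((Nat.gcdB ρR m : ℤ) : ℂ) := by
    exact_mod_cast congrArg (fun x : ℤ => (x : ℂ)) (Nat.gcd_eq_gcd_ab ρR m)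
  have hangle : ∀ k : ℕ, (k : ℂ) / (L : ℂ)
      = (((k : ℤ) * Nat.gcdB ρR m : ℤ) : ℂ) / (ρR : ℂ)
        + (((k : ℤ) * Nat.gcdA ρR m : ℤ) : ℂ) / (m : ℂ) := by
    intro k
    field_simp
    push_cast
    linear_combination (k : ℂ) * (L : ℂ) * hbez - (k : ℂ) * hgl
  have memR_L : ∀ k : ℕ,
      c + Complex.exp ((k : ℂ) / (L : ℂ) * (2 * (Real.pi : ℂ)) * Complex.I) * (z0 - c) ∈ R := by
    intro k
    have := memR_int ((k : ℤ) * Nat.gcdB ρR m) ((k : ℤ) * Nat.gcdA ρR m)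
    rw [show (k : ℂ) / (L : ℂ) * (2 * (Real.pi : ℂ)) * Complex.I
        = ((((k : ℤ) * Nat.gcdB ρR m : ℤ) : ℂ) / (ρR : ℂ)
          + (((k : ℤ) * Nat.gcdA ρR m : ℤ) : ℂ) / (m : ℂ)) * (2 * (Real.pi : ℂ)) * Complex.I by
      rw [← hangle k]]
    exact this
  -- the big regular L-gon
  set f : ℕ → ℂ := fun k =>
    c + Complex.exp ((k : ℂ) / (L : ℂ) * (2 * (Real.pi : ℂ)) * Complex.I) * (z0 - c) with hf
  have hfabs : ∀ k : ℕ, ‖f k - c‖ = rC := by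
    intro k
    have : f k - c = Complex.exp ((k : ℂ) / (L : ℂ) * (2 * (Real.pi : ℂ)) * Complex.I)
        * (z0 - c) := by simp [hf]
    rw [this, norm_mul,
      show (k : ℂ) / (L : ℂ) * (2 * (Real.pi : ℂ)) * Complex.I
        = (((k : ℝ) / (L : ℝ) * (2 * Real.pi) : ℝ) : ℂ) * Complex.I by push_cast; ring,
      Complex.norm_exp_ofReal_mul_I, one_mul, (hMsub z0 hz0M).2]
  have hfinj : Set.InjOn f (Finset.range L) := by
    intro k hk k' hk' hkk
    simp only [Finset.coe_range, Set.mem_Iio] at hk hk'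
    have hE : Complex.exp ((k : ℂ) / (L : ℂ) * (2 * (Real.pi : ℂ)) * Complex.I)
        = Complex.exp ((k' : ℂ) / (L : ℂ) * (2 * (Real.pi : ℂ)) * Complex.I) :=
      mul_right_cancel₀ hz0c (add_left_cancel hkk)
    rw [Complex.exp_eq_exp_iff_exists_int] at hE
    obtain ⟨n, hn⟩ := hE
    have hpiI : (2 * (Real.pi : ℂ)) * Complex.I ≠ 0 :=
      mul_ne_zero (mul_ne_zero two_ne_zero (Complex.ofReal_ne_zero.mpr Real.pi_ne_zero))
        Complex.I_ne_zero
    have h2 : ((k : ℂ) / (L : ℂ) - (k' : ℂ) / (L : ℂ) - n) * (2 * (Real.pi : ℂ) * Complex.I)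
        = 0 := by linear_combination hn
    have h3 : (k : ℂ) / (L : ℂ) - (k' : ℂ) / (L : ℂ) - n = 0 := by
      rcases mul_eq_zero.mp h2 with h | h
      · exact h
      · exact absurd h (by ring_nf; ring_nf at hpiI; exact hpiI)
    have h4 : (k : ℂ) = (k' : ℂ) + (n : ℂ) * (L : ℂ) := by
      field_simp at h3
      linear_combination h3
    have h5 : (k : ℤ) = (k' : ℤ) + n * (L : ℤ) := by exact_mod_cast h4
    have hLpos : (0 : ℤ) < (L : ℤ) := by exact_mod_cast Nat.pos_of_ne_zero hLne
    have hkL : (k : ℤ) < (L : ℤ) := by exact_mod_cast hk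
    have hk'L : (k' : ℤ) < (L : ℤ) := by exact_mod_cast hk'
    have hk0 : (0 : ℤ) ≤ (k : ℤ) := Int.natCast_nonneg k
    have hk'0 : (0 : ℤ) ≤ (k' : ℤ) := Int.natCast_nonneg k'
    have hn0 : n = 0 := by
      rcases lt_trichotomy n 0 with h | h | h
      · have hn1 : n ≤ -1 := by omega
        have : n * (L : ℤ) ≤ -1 * (L : ℤ) := mul_le_mul_of_nonneg_right hn1 hLpos.le
        linarith
      · exact h
      · have hn1 : 1 ≤ n := by omega
        have : 1 * (L : ℤ) ≤ n * (L : ℤ) := mul_le_mul_of_nonneg_right hn1 hLpos.le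
        linarith
    have h6 : (k : ℤ) = (k' : ℤ) := by rw [hn0] at h5; simpa using h5
    exact_mod_cast h6
  set M' : Finset ℂ := (Finset.range L).image f with hM'
  have hM'card : M'.card = L := by
    rw [hM', Finset.card_image_of_injOn hfinj, Finset.card_range]
  have hM'sub : ∀ z ∈ M', z ∈ R ∧ ‖z - c‖ = rC := by
    intro z hz
    obtain ⟨k, hk, rfl⟩ := Finset.mem_image.mp hz
    exact ⟨memR_L k, hfabs k⟩
  have hstep : ∀ k : ℕ, rot c (2 * Real.pi / (L : ℝ)) (f k) = f (k + 1) := by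
    intro k
    have harg : (((2 * Real.pi / (L : ℝ)) : ℝ) : ℂ) * Complex.I
        + (k : ℂ) / (L : ℂ) * (2 * (Real.pi : ℂ)) * Complex.I
        = ((k + 1 : ℕ) : ℂ) / (L : ℂ) * (2 * (Real.pi : ℂ)) * Complex.I := by
      push_cast; ring
    simp only [hf, rot, add_sub_cancel_left]
    rw [← mul_assoc, ← Complex.exp_add, harg]
  have hfL : f L = f 0 := by
    simp only [hf, Nat.cast_zero, zero_div, zero_mul, Complex.exp_zero, div_self hL0, one_mul]
    rw [Complex.exp_two_pi_mul_I, one_mul]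
  have himg : Finset.image (rot c (2 * Real.pi / (L : ℝ))) M' = M' := by
    apply Finset.eq_of_subset_of_card_le
    · intro z hz
      obtain ⟨w', hw', rfl⟩ := Finset.mem_image.mp hz
      obtain ⟨k, hk, rfl⟩ := Finset.mem_image.mp hw'
      rw [hstep k]
      rw [Finset.mem_range] at hk
      rcases Nat.lt_or_ge (k + 1) L with hlt | hge
      · exact Finset.mem_image.mpr ⟨k + 1, Finset.mem_range.mpr hlt, rfl⟩
      · have hkl : k + 1 = L := by omega
        rw [hkl, hfL]
        exact Finset.mem_image.mpr ⟨0, Finset.mem_range.mpr (Nat.pos_of_ne_zero hLne), rfl⟩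
    · rw [Finset.card_image_of_injective _ (rot_injective c _)]
  have hval : M'.val.map (rot c (2 * Real.pi / (L : ℝ))) = M'.val := by
    rw [← Finset.image_val_of_injOn ((rot_injective c _).injOn), himg]
  have hmL : m ∣ L := Nat.dvd_lcm_right ρR m
  have hmleL : m ≤ L := Nat.le_of_dvd (Nat.pos_of_ne_zero hLne) hmL
  have hgon' : IsRegularMGon c M'.card M'.val := by
    refine ⟨rfl, Or.inr ⟨M'.nodup, ⟨rC, hrCpos,
      fun z hz => (hM'sub z (Finset.mem_val.mp hz)).2⟩, ?_⟩⟩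
    rw [hM'card]
    exact hval
  have hle := hMmax M' hM'sub hgon' (by omega) (by rw [hM'card]; exact Nat.lcm_dvd hdiv hMdvd)
  rw [hM'card] at hle
  have hLm : L = m := le_antisymm hle hmleL
  have hdL : ρR ∣ L := Nat.dvd_lcm_left ρR m
  rwa [hLm] at hdL
end

section
/- Union of orbits of a regular polygon under a rotation: let φ be a rotation about center c of order k (φᵏ = id, φⁱ ≠ id for 0 < i < k), and let M be the vertex set of a regular m-gon centered at c. Then the set {φⁱ(x) : x ∈ M, 0 ≤ i < k} is the vertex set of a regular lcm(k, m)-gon centered at c (all points lying on the same circle as M). -/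
open scoped Classical

lemma rot_iterate (c : ℂ) (θ : ℝ) (n : ℕ) (z : ℂ) :
    (rot c θ)^[n] z = c + (Complex.exp (↑θ * Complex.I))^n * (z - c) := by
  induction n with
  | zero => simp
  | succ n ih =>
      rw [Function.iterate_succ_apply', ih, rot, pow_succ]
      ring

/-- The union of the orbits of the vertices of a regular `m`-gon centered at `c` under a
rotation of order `k` about `c` is the vertex set of a regular `lcm(k,m)`-gon centered
at `c`, lying on the same circle. -/
theorem stmt_10 (c : ℂ) (k m j : ℕ) (hk : 1 ≤ k) (hm : 1 ≤ m)
    (hj : Nat.gcd j k = 1)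
    (M : Finset ℂ) (hcard : M.card = m)
    (r : ℝ) (hr : 0 < r) (hrad : ∀ z ∈ M, ‖z - c‖ = r)
    (hrot : Finset.image (rot c (2 * Real.pi / (m : ℝ))) M = M) :
    let φ := rot c (2 * Real.pi * (j : ℝ) / (k : ℝ))
    let N := Finset.image (fun pr : ℕ × ℂ => φ^[pr.1] pr.2) (Finset.range k ×ˢ M)
    N.card = Nat.lcm k m ∧
    Finset.image (rot c (2 * Real.pi / (Nat.lcm k m : ℝ))) N = N ∧
    ∀ z ∈ N, ‖z - c‖ = r := by
  intro φ N
  have hNdef : N = Finset.image (fun pr : ℕ × ℂ => φ^[pr.1] pr.2)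
      (Finset.range k ×ˢ M) := rfl
  have hφdef : φ = rot c (2 * Real.pi * (j : ℝ) / (k : ℝ)) := rfl
  have hk0 : (k : ℝ) ≠ 0 := by positivity
  have hm0 : (m : ℝ) ≠ 0 := by positivity
  have hkc : (k : ℂ) ≠ 0 := Nat.cast_ne_zero.mpr (by omega)
  have hmc : (m : ℂ) ≠ 0 := Nat.cast_ne_zero.mpr (by omega)
  have hkm : k * m ≠ 0 := by positivity
  set d := Nat.gcd k m with hd
  set L := Nat.lcm k m with hL
  have hdL : d * L = k * m := Nat.gcd_mul_lcm k m
  have hd0 : 0 < d := Nat.gcd_pos_of_pos_left m hk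
  have hL0 : 0 < L := Nat.lcm_pos hk hm
  set ζ : ℂ := Complex.exp (↑(2 * Real.pi / ((k * m : ℕ) : ℝ)) * Complex.I) with hζdef
  have hζ0 : ζ ≠ 0 := Complex.exp_ne_zero _
  have hζprim : IsPrimitiveRoot ζ (k * m) := by
    have h := Complex.isPrimitiveRoot_exp (k * m) hkm
    have : (2 * (Real.pi : ℂ) * Complex.I / ((k * m : ℕ) : ℂ)) =
        ↑(2 * Real.pi / ((k * m : ℕ) : ℝ)) * Complex.I := by
      push_cast
      ring
    rwa [this] at h
  -- basic power identities
  have hζk : ζ ^ k = Complex.exp (↑(2 * Real.pi / (m : ℝ)) * Complex.I) := by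
    rw [hζdef, ← Complex.exp_nat_mul]
    congr 1
    push_cast
    field_simp
  have hζjm : ζ ^ (j * m) = Complex.exp (↑(2 * Real.pi * (j : ℝ) / (k : ℝ)) * Complex.I) := by
    rw [hζdef, ← Complex.exp_nat_mul]
    congr 1
    push_cast
    field_simp
  have hζd : ζ ^ d = Complex.exp (↑(2 * Real.pi / (L : ℝ)) * Complex.I) := by
    rw [hζdef, ← Complex.exp_nat_mul]
    congr 1
    have hLc : ((L : ℂ)) ≠ 0 := Nat.cast_ne_zero.mpr (by omega)
    have hdLc : ((d : ℂ)) * ((L : ℂ)) = (k : ℂ) * (m : ℂ) := by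
      have h := congrArg (fun n : ℕ => (n : ℂ)) hdL
      push_cast at h
      exact h
    push_cast
    field_simp
    linear_combination hdLc
  -- pick a base vertex
  obtain ⟨z₀, hz₀⟩ : M.Nonempty := Finset.card_pos.mp (by omega)
  set w : ℂ := z₀ - c with hwdef
  have hwabs : ‖w‖ = r := hrad z₀ hz₀
  have hw0 : w ≠ 0 := by
    intro h
    rw [h, norm_zero] at hwabs
    linarith
  -- M is closed under the basic rotation
  have hMclosed : ∀ z ∈ M, rot c (2 * Real.pi / (m : ℝ)) z ∈ M := by
    intro z hz
    rw [← hrot]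
    exact Finset.mem_image_of_mem _ hz
  have hiter : ∀ (a : ℕ) (z : ℂ), z ∈ M → (rot c (2 * Real.pi / (m : ℝ)))^[a] z ∈ M := by
    intro a
    induction a with
    | zero => intro z hz; simpa using hz
    | succ a ih =>
        intro z hz
        rw [Function.iterate_succ_apply]
        exact ih _ (hMclosed z hz)
  -- M is exactly the rotated copies of z₀
  have hMeq : Finset.image (fun a : ℕ => c + ζ ^ (a * k) * w) (Finset.range m) = M := by
    have hsub : Finset.image (fun a : ℕ => c + ζ ^ (a * k) * w) (Finset.range m) ⊆ M := by
      intro x hx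
      simp only [Finset.mem_image, Finset.mem_range] at hx
      obtain ⟨a, _, rfl⟩ := hx
      have h1 : c + ζ ^ (a * k) * w = (rot c (2 * Real.pi / (m : ℝ)))^[a] z₀ := by
        rw [rot_iterate, ← hζk, ← pow_mul, mul_comm k a, hwdef]
      rw [h1]
      exact hiter a z₀ hz₀
    have hcardim :
        (Finset.image (fun a : ℕ => c + ζ ^ (a * k) * w) (Finset.range m)).card = m := by
      rw [Finset.card_image_of_injOn, Finset.card_range]
      intro a ha b hb hab
      simp only [Finset.mem_coe, Finset.mem_range] at ha hb
      have h2 : ζ ^ (a * k) = ζ ^ (b * k) :=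
        mul_right_cancel₀ hw0 (add_left_cancel hab)
      have hak : a * k < k * m :=
        (mul_lt_mul_of_pos_right ha (by omega)).trans_eq (mul_comm m k)
      have hbk : b * k < k * m :=
        (mul_lt_mul_of_pos_right hb (by omega)).trans_eq (mul_comm m k)
      exact Nat.eq_of_mul_eq_mul_right (by omega) (hζprim.pow_inj hak hbk h2)
    exact Finset.eq_of_subset_of_card_le hsub (by rw [hcardim, hcard])
  -- iterate of φ
  have hφiter : ∀ (i : ℕ) (u : ℂ), φ^[i] (c + u) = c + ζ ^ (j * m * i) * u := by
    intro i u
    rw [hφdef, rot_iterate, ← hζjm, ← pow_mul]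
    ring
  -- zpow congruence
  have hzpow_eq : ∀ A B : ℤ, ((k * m : ℕ) : ℤ) ∣ A - B → ζ ^ A = ζ ^ B := by
    rintro A B ⟨q, hq⟩
    have h1 : A = B + ((k * m : ℕ) : ℤ) * q := by linarith
    rw [h1, zpow_add₀ hζ0, zpow_mul, zpow_natCast, hζprim.pow_eq_one, one_zpow, mul_one]
  -- reduction of exponents mod L
  have hmodpow : ∀ s : ℕ, ζ ^ (s * d) = ζ ^ ((s % L) * d) := by
    intro s
    have h1 : s * d = k * m * (s / L) + (s % L) * d := by
      conv_lhs => rw [← Nat.div_add_mod s L]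
      rw [← hdL]
      ring
    rw [h1, pow_add, pow_mul, hζprim.pow_eq_one, one_pow, one_mul]
  have hgcd2 : Nat.gcd (j * m) k = d := by
    rw [Nat.Coprime.gcd_mul_left_cancel m hj, Nat.gcd_comm]
  -- the key description of N
  have hNL : N = Finset.image (fun t : ℕ => c + ζ ^ (t * d) * w) (Finset.range L) := by
    ext x
    rw [hNdef]
    simp only [Finset.mem_image, Finset.mem_product, Finset.mem_range, Prod.exists]
    constructor
    · rintro ⟨i, z, ⟨hi, hz⟩, rfl⟩
      rw [← hMeq] at hz
      simp only [Finset.mem_image, Finset.mem_range] at hz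
      obtain ⟨a, ha, rfl⟩ := hz
      have hx : φ^[i] (c + ζ ^ (a * k) * w) = c + ζ ^ (j * m * i + a * k) * w := by
        rw [hφiter, pow_add]
        ring
      rw [hx]
      obtain ⟨s, hs⟩ : d ∣ j * m * i + a * k :=
        dvd_add (((Nat.gcd_dvd_right k m).mul_left j).mul_right i)
          ((Nat.gcd_dvd_left k m).mul_left a)
      exact ⟨s % L, Nat.mod_lt s hL0, by rw [hs, mul_comm d s, hmodpow s]⟩
    · rintro ⟨t, ht, rfl⟩
      set A := Nat.gcdA (j * m) k with hA
      set B := Nat.gcdB (j * m) k with hB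
      have hbez : ((d : ℕ) : ℤ) = ((j * m : ℕ) : ℤ) * A + ((k : ℕ) : ℤ) * B := by
        rw [← hgcd2]
        exact Nat.gcd_eq_gcd_ab (j * m) k
      set i' : ℤ := (t * A) % k with hi'
      set a' : ℤ := (t * B) % m with ha'
      have hkz : (0 : ℤ) < (k : ℤ) := by exact_mod_cast hk
      have hmz : (0 : ℤ) < (m : ℤ) := by exact_mod_cast hm
      have hi'0 : 0 ≤ i' := Int.emod_nonneg _ (by omega)
      have hi'lt : i' < k := Int.emod_lt_of_pos _ hkz
      have ha'0 : 0 ≤ a' := Int.emod_nonneg _ (by omega)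
      have ha'lt : a' < m := Int.emod_lt_of_pos _ hmz
      refine ⟨i'.toNat, c + ζ ^ (a'.toNat * k) * w, ⟨by omega, ?_⟩, ?_⟩
      · rw [← hMeq]
        simp only [Finset.mem_image, Finset.mem_range]
        exact ⟨a'.toNat, by omega, rfl⟩
      · have key : ζ ^ (j * m * i'.toNat + a'.toNat * k) = ζ ^ (t * d) := by
          have h1 : ((j * m * i'.toNat + a'.toNat * k : ℕ) : ℤ) - ((t * d : ℕ) : ℤ) =
              ((j : ℤ) * m) * (i' - t * A) + (k : ℤ) * (a' - t * B) := by
            have hb := hbez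
            push_cast at hb ⊢
            rw [Int.toNat_of_nonneg hi'0, Int.toNat_of_nonneg ha'0]
            linear_combination (-(t : ℤ)) * hb
          have hdk : (k : ℤ) ∣ (i' - t * A) :=
            ⟨-((t * A : ℤ) / k), by rw [hi', Int.emod_def]; ring⟩
          have hdm : (m : ℤ) ∣ (a' - t * B) :=
            ⟨-((t * B : ℤ) / m), by rw [ha', Int.emod_def]; ring⟩
          obtain ⟨u, hu⟩ := hdk
          obtain ⟨v, hv⟩ := hdm
          have h2 : ((k * m : ℕ) : ℤ) ∣
              ((j * m * i'.toNat + a'.toNat * k : ℕ) : ℤ) - ((t * d : ℕ) : ℤ) := by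
            refine ⟨(j : ℤ) * u + v, ?_⟩
            rw [h1, hu, hv]
            push_cast
            ring
          have h3 := hzpow_eq _ _ h2
          rw [zpow_natCast, zpow_natCast] at h3
          exact h3
        calc φ^[i'.toNat] (c + ζ ^ (a'.toNat * k) * w)
            = c + ζ ^ (j * m * i'.toNat + a'.toNat * k) * w := by
              rw [hφiter, pow_add]; ring
          _ = c + ζ ^ (t * d) * w := by rw [key]
  -- finish: the three claims
  refine ⟨?_, ?_, ?_⟩
  · rw [hNL, Finset.card_image_of_injOn, Finset.card_range]
    intro t ht s hs hts
    simp only [Finset.mem_coe, Finset.mem_range] at ht hs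
    have h2 : ζ ^ (t * d) = ζ ^ (s * d) := mul_right_cancel₀ hw0 (add_left_cancel hts)
    have htd : t * d < k * m := by
      calc t * d < L * d := mul_lt_mul_of_pos_right ht hd0
        _ = k * m := by rw [mul_comm]; exact hdL
    have hsd : s * d < k * m := by
      calc s * d < L * d := mul_lt_mul_of_pos_right hs hd0
        _ = k * m := by rw [mul_comm]; exact hdL
    exact Nat.eq_of_mul_eq_mul_right hd0 (hζprim.pow_inj htd hsd h2)
  · have hrotinj : Function.Injective (rot c (2 * Real.pi / (L : ℝ))) := by
      intro a b hab
      simp only [rot] at hab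
      exact sub_left_injective (mul_left_cancel₀ (Complex.exp_ne_zero _) (add_left_cancel hab))
    apply Finset.eq_of_subset_of_card_le
    · intro x hx
      simp only [Finset.mem_image] at hx
      obtain ⟨y, hy, rfl⟩ := hx
      rw [hNL] at hy ⊢
      simp only [Finset.mem_image, Finset.mem_range] at hy ⊢
      obtain ⟨t, ht, rfl⟩ := hy
      have hrw : rot c (2 * Real.pi / (L : ℝ)) (c + ζ ^ (t * d) * w)
          = c + ζ ^ ((t + 1) * d) * w := by
        simp only [rot]
        rw [← hζd]
        have h4 : (t + 1) * d = d + t * d := by ring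
        rw [h4, pow_add]
        ring
      exact ⟨(t + 1) % L, Nat.mod_lt _ hL0, by rw [hrw, hmodpow (t + 1)]⟩
    · rw [Finset.card_image_of_injective _ hrotinj]
  · intro z hz
    rw [hNL] at hz
    simp only [Finset.mem_image, Finset.mem_range] at hz
    obtain ⟨t, ht, rfl⟩ := hz
    rw [add_sub_cancel_left, norm_mul, norm_pow, hζdef, Complex.norm_exp_ofReal_mul_I,
      one_pow, one_mul, hwabs]
end

section
/- In the transition graph of the pattern-formation algorithm, if every self-loop and every edge entering the distinguished node T₂ can be traversed only finitely often, and the only simple cycles through nodes other than self-loops all pass through T₂, then every infinite walk in the graph is eventually constant at a sink node. -/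
/-- In a finite transition graph where the only sink is `TF`, every self-loop (and
stall) at a node other than `TF` occurs finitely often along an infinite walk, every
simple cycle of length at least 2 passes through `T₂`, and the walk enters `T₂` only
finitely many times, the walk is eventually constant at `TF`. -/
theorem stmt_19 {V : Type*} [Fintype V] (E : V → V → Prop)
    (TF T₂ : V)
    (hsink : ∀ v, E TF v → v = TF)
    (hout : ∀ v, v ≠ TF → ∃ u, E v u ∧ u ≠ v)
    (w : ℕ → V)
    (hwalk : ∀ i, E (w i) (w (i + 1)) ∨ w (i + 1) = w i)
    (hself : ∀ v, v ≠ TF → {i | w i = v ∧ w (i + 1) = v}.Finite)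
    (hcyc : ∀ (n : ℕ) (cyc : ℕ → V), 2 ≤ n →
      (∀ i < n, E (cyc i) (cyc ((i + 1) % n))) →
      (∀ i j, i < j → j < n → cyc i ≠ cyc j) →
      ∃ i < n, cyc i = T₂)
    (hT2 : {i | w (i + 1) = T₂ ∧ w i ≠ T₂}.Finite) :
    ∃ N, ∀ i ≥ N, w i = TF := by
  classical
  by_contra hcon
  push_neg at hcon
  -- once at TF, always at TF
  have hstay : ∀ i, w i = TF → ∀ j, i ≤ j → w j = TF := by
    intro i hi j hij
    induction j, hij using Nat.le_induction with
    | base => exact hi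
    | succ k hk ih =>
        rcases hwalk k with h' | h'
        · rw [ih] at h'; exact hsink _ h'
        · rw [h', ih]
  -- the walk never reaches TF
  have hne : ∀ i, w i ≠ TF := by
    intro i hi
    obtain ⟨k, hk, hk'⟩ := hcon i
    exact hk' (hstay i hi k hk)
  -- stalls (w (i+1) = w i) happen only finitely often
  have hS : {i | w (i + 1) = w i}.Finite := by
    have hsub : {i | w (i + 1) = w i} ⊆
        ⋃ v ∈ {v : V | v ≠ TF}, {i | w i = v ∧ w (i + 1) = v} := by
      intro i hi
      simp only [Set.mem_iUnion, Set.mem_setOf_eq]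
      exact ⟨w i, hne i, rfl, hi⟩
    exact Set.Finite.subset ((Set.toFinite _).biUnion (fun v hv => hself v hv)) hsub
  obtain ⟨N1, hN1⟩ := hS.bddAbove
  obtain ⟨N2, hN2⟩ := hT2.bddAbove
  set N : ℕ := max N1 N2 + 1 with hNdef
  have key : ∀ i, N ≤ i → w (i + 1) ≠ w i ∧ (w (i + 1) = T₂ → w i = T₂) := by
    intro i hi
    constructor
    · intro h
      have := hN1 h
      omega
    · intro h
      by_contra h'
      have := hN2 ⟨h, h'⟩
      omega
  have hnostall : ∀ i, N ≤ i → w (i + 1) ≠ w i := fun i hi => (key i hi).1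
  have hnoT2 : ∀ i, N ≤ i → w (i + 1) ≠ T₂ := by
    intro i hi h
    exact (key i hi).1 (h.trans ((key i hi).2 h).symm)
  set M : ℕ := N + 1 with hMdef
  have hMT2 : ∀ i, M ≤ i → w i ≠ T₂ := by
    intro i hi
    obtain ⟨j, rfl⟩ : ∃ j, i = j + 1 := ⟨i - 1, by omega⟩
    exact hnoT2 j (by omega)
  have hE : ∀ i, M ≤ i → E (w i) (w (i + 1)) := by
    intro i hi
    rcases hwalk i with h | h
    · exact h
    · exact absurd h (hnostall i (by omega))
  -- pigeonhole: some value repeats after M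
  have hpig : ∃ d, 0 < d ∧ ∃ i, M ≤ i ∧ w (i + d) = w i := by
    have hninj : ¬ Function.Injective (fun k : Fin (Fintype.card V + 1) => w (M + k)) := by
      intro hinj
      have := Fintype.card_le_of_injective _ hinj
      simp at this
    obtain ⟨a, b, hab, hne'⟩ := Function.not_injective_iff.mp hninj
    rcases lt_or_gt_of_ne hne' with h | h
    · exact ⟨b - a, by omega, M + a, by omega, by
        have : M + a + (↑b - ↑a) = M + ↑b := by omega
        rw [this, hab]⟩
    · exact ⟨a - b, by omega, M + b, by omega, by
        have : M + b + (↑a - ↑b) = M + ↑a := by omega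
        rw [this, hab]⟩
  set d : ℕ := Nat.find hpig with hddef
  obtain ⟨hdpos, i, hiM, hrep⟩ := Nat.find_spec hpig
  rw [← hddef] at hdpos hrep
  have hdmin : ∀ d', d' < d → ¬(0 < d' ∧ ∃ i, M ≤ i ∧ w (i + d') = w i) :=
    fun d' hd' => Nat.find_min hpig hd'
  have hd2 : 2 ≤ d := by
    by_contra h
    have hd1 : d = 1 := by omega
    rw [hd1] at hrep
    exact hnostall i (by omega) hrep
  -- build the simple cycle
  have hinj : ∀ a b, a < b → b < d → w (i + a) ≠ w (i + b) := by
    intro a b hab hbd heq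
    refine hdmin (b - a) (by omega) ⟨by omega, i + a, by omega, ?_⟩
    have : i + a + (b - a) = i + b := by omega
    rw [this, heq]
  have hedges : ∀ k < d, E (w (i + k)) (w (i + (k + 1) % d)) := by
    intro k hk
    by_cases h : k + 1 = d
    · have h0 : (k + 1) % d = 0 := by rw [h, Nat.mod_self]
      rw [h0]
      have : E (w (i + k)) (w (i + k + 1)) := hE (i + k) (by omega)
      have heq : w (i + k + 1) = w (i + 0) := by
        have : i + k + 1 = i + d := by omega
        rw [this, hrep]; norm_num
      rwa [heq] at this
    · have h1 : (k + 1) % d = k + 1 := Nat.mod_eq_of_lt (by omega)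
      rw [h1]
      have : E (w (i + k)) (w (i + k + 1)) := hE (i + k) (by omega)
      have heq : i + k + 1 = i + (k + 1) := by omega
      rwa [heq] at this
  obtain ⟨k, hkd, hkT⟩ := hcyc d (fun k => w (i + k)) hd2 hedges hinj
  exact hMT2 (i + k) (by omega) hkT
end
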